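/- With D and F as in the box-product decomposition theorem: if D_{P₁,α}(G₁⁽¹⁾,G₁⁽²⁾) ≤ ε₁ and D_{P₂,α}(G₂⁽¹⁾,G₂⁽²⁾) ≤ ε₂ with P₁ᵀP₁ = I and P₂ᵀP₂ = I, then D_{P₁⊗P₂,α}(G□⁽¹⁾, G□⁽²⁾) ≤ (√(n₁⁽¹⁾) + √(n₂⁽¹⁾))·max(ε₁, ε₂). -/

import Mathlib

/-
The Laplacian of a box product is `L₁ ⊗ I + I ⊗ L₂`, so by the mixed-product rule the defect
`(1/√α) P L - √α L' P` of `P₁ ⊗ P₂` splits as `E₁ ⊗ P₂ + P₁ ⊗ E₂`, where `Eᵢ` is the defect of `Pᵢ`.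
The Frobenius norm is multiplicative on Kronecker products and equals `√nᵢ` on a matrix with
orthonormal columns, so the triangle inequality gives `ε₁ √n₂ + √n₁ ε₂`.
-/

open Matrix Kronecker

noncomputable def frob {m n : Type*} [Fintype m] [Fintype n] (A : Matrix m n ℝ) : ℝ :=
  Real.sqrt ((Aᵀ * A).trace)

noncomputable def lap {V : Type*} [Fintype V] [DecidableEq V]
    (G : SimpleGraph V) [DecidableRel G.Adj] : Matrix V V ℝ :=
  G.adjMatrix ℝ - G.degMatrix ℝ

noncomputable def diffDist {m n : Type*} [Fintype m] [DecidableEq m] [Fintype n] [DecidableEq n]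
    (G : SimpleGraph m) [DecidableRel G.Adj] (H : SimpleGraph n) [DecidableRel H.Adj]
    (P : Matrix n m ℝ) (α : ℝ) : ℝ :=
  frob ((1 / Real.sqrt α) • (P * lap G) - Real.sqrt α • (lap H * P))

namespace Matrix

variable {R l m n p : Type*} [Ring R]

theorem sub_kronecker (A B : Matrix l m R) (C : Matrix n p R) :
    (A - B) ⊗ₖ C = A ⊗ₖ C - B ⊗ₖ C := by
  ext; simp [sub_mul]

theorem kronecker_sub (A : Matrix l m R) (B C : Matrix n p R) :
    A ⊗ₖ (B - C) = A ⊗ₖ B - A ⊗ₖ C := by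
  ext; simp [mul_sub]

end Matrix

section Frobenius

attribute [local instance] Matrix.frobeniusSeminormedAddCommGroup

variable {l m n p : Type*} [Fintype l] [Fintype m] [Fintype n] [Fintype p]

theorem frob_eq_frobenius_norm (A : Matrix m n ℝ) : frob A = ‖A‖ := by
  rw [frob, frobenius_norm_def, Real.sqrt_eq_rpow, trace, Finset.sum_comm]
  simp [Matrix.mul_apply, ← sq]

theorem frob_add_le (A B : Matrix m n ℝ) : frob (A + B) ≤ frob A + frob B := by
  simpa only [frob_eq_frobenius_norm] using norm_add_le A B

theorem frob_kronecker (A : Matrix l m ℝ) (B : Matrix n p ℝ) :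
    frob (A ⊗ₖ B) = frob A * frob B := by
  have hA : 0 ≤ (Aᵀ * A).trace := by
    simpa using (posSemidef_conjTranspose_mul_self A).trace_nonneg
  rw [frob, ← kroneckerMap_transpose, ← mul_kronecker_mul, trace_kronecker, Real.sqrt_mul hA,
    frob, frob]

theorem frob_of_transpose_mul_self_eq_one [DecidableEq m] {P : Matrix n m ℝ} (h : Pᵀ * P = 1) :
    frob P = Real.sqrt (Fintype.card m) := by
  rw [frob, h, trace_one]

end Frobenius

namespace SimpleGraph

variable {R V W : Type*} [DecidableEq V] [DecidableEq W]
  (G : SimpleGraph V) (H : SimpleGraph W) [DecidableRel G.Adj] [DecidableRel H.Adj]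
  [DecidableRel (G □ H).Adj]

theorem adjMatrix_boxProd [NonAssocSemiring R] :
    (G □ H).adjMatrix R = G.adjMatrix R ⊗ₖ (1 : Matrix W W R) + 1 ⊗ₖ H.adjMatrix R := by
  ext ⟨a, b⟩ ⟨c, d⟩
  by_cases hac : a = c <;> by_cases hbd : b = d <;> simp_all [adjMatrix_apply, one_apply]

theorem degMatrix_boxProd [Fintype V] [Fintype W] [NonAssocSemiring R] :
    (G □ H).degMatrix R = G.degMatrix R ⊗ₖ (1 : Matrix W W R) + 1 ⊗ₖ H.degMatrix R := by
  rw [degMatrix, degMatrix, degMatrix, ← diagonal_one, ← diagonal_one,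
    diagonal_kronecker_diagonal, diagonal_kronecker_diagonal, diagonal_add]
  congr 1
  ext x
  simp [degree_boxProd]

end SimpleGraph

theorem lap_boxProd {V W : Type*} [Fintype V] [Fintype W] [DecidableEq V] [DecidableEq W]
    (G : SimpleGraph V) (H : SimpleGraph W) [DecidableRel G.Adj] [DecidableRel H.Adj]
    [DecidableRel (G □ H).Adj] :
    lap (G □ H) = lap G ⊗ₖ (1 : Matrix W W ℝ) + 1 ⊗ₖ lap H := by
  rw [lap, lap, lap, G.adjMatrix_boxProd, G.degMatrix_boxProd, sub_kronecker, kronecker_sub]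
  abel

noncomputable def lapDefect {m n : Type*} [Fintype m] [DecidableEq m] [Fintype n] [DecidableEq n]
    (G : SimpleGraph m) [DecidableRel G.Adj] (H : SimpleGraph n) [DecidableRel H.Adj]
    (P : Matrix n m ℝ) (α : ℝ) : Matrix n m ℝ :=
  (1 / Real.sqrt α) • (P * lap G) - Real.sqrt α • (lap H * P)

theorem diffDist_eq_frob_lapDefect {m n : Type*} [Fintype m] [DecidableEq m] [Fintype n]
    [DecidableEq n] (G : SimpleGraph m) [DecidableRel G.Adj] (H : SimpleGraph n)
    [DecidableRel H.Adj] (P : Matrix n m ℝ) (α : ℝ) :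
    diffDist G H P α = frob (lapDefect G H P α) :=
  rfl

section BoxProd

variable {m₁ m₂ n₁ n₂ : Type*} [Fintype m₁] [Fintype m₂] [Fintype n₁] [Fintype n₂]
  [DecidableEq m₁] [DecidableEq m₂] [DecidableEq n₁] [DecidableEq n₂]
  (G₁ : SimpleGraph m₁) (G₂ : SimpleGraph m₂) (H₁ : SimpleGraph n₁) (H₂ : SimpleGraph n₂)
  [DecidableRel G₁.Adj] [DecidableRel G₂.Adj] [DecidableRel H₁.Adj] [DecidableRel H₂.Adj]
  [DecidableRel (G₁ □ G₂).Adj] [DecidableRel (H₁ □ H₂).Adj]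
  (P₁ : Matrix n₁ m₁ ℝ) (P₂ : Matrix n₂ m₂ ℝ) (α : ℝ)

theorem lapDefect_boxProd :
    lapDefect (G₁ □ G₂) (H₁ □ H₂) (P₁ ⊗ₖ P₂) α =
      lapDefect G₁ H₁ P₁ α ⊗ₖ P₂ + P₁ ⊗ₖ lapDefect G₂ H₂ P₂ α := by
  simp only [lapDefect, lap_boxProd, Matrix.mul_add, Matrix.add_mul, ← mul_kronecker_mul,
    Matrix.mul_one, Matrix.one_mul, sub_kronecker, kronecker_sub, smul_kronecker, kronecker_smul,
    smul_add]
  abel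

theorem diffDist_boxProd_le :
    diffDist (G₁ □ G₂) (H₁ □ H₂) (P₁ ⊗ₖ P₂) α ≤
      diffDist G₁ H₁ P₁ α * frob P₂ + frob P₁ * diffDist G₂ H₂ P₂ α := by
  simp only [diffDist_eq_frob_lapDefect, lapDefect_boxProd, ← frob_kronecker]
  exact frob_add_le _ _

end BoxProd

theorem stmt13_general {a₁ a₂ b₁ b₂ : ℕ}
    (G₁₁ : SimpleGraph (Fin a₁)) (G₁₂ : SimpleGraph (Fin a₂))
    (G₂₁ : SimpleGraph (Fin b₁)) (G₂₂ : SimpleGraph (Fin b₂))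
    [DecidableRel G₁₁.Adj] [DecidableRel G₁₂.Adj]
    [DecidableRel G₂₁.Adj] [DecidableRel G₂₂.Adj]
    [DecidableRel (G₁₁ □ G₂₁).Adj] [DecidableRel (G₁₂ □ G₂₂).Adj]
    (P₁ : Matrix (Fin a₂) (Fin a₁) ℝ) (P₂ : Matrix (Fin b₂) (Fin b₁) ℝ)
    (hP₁ : P₁ᵀ * P₁ = 1) (hP₂ : P₂ᵀ * P₂ = 1)
    (α : ℝ) (ε₁ ε₂ : ℝ)
    (hε₁ : diffDist G₁₁ G₁₂ P₁ α ≤ ε₁) (hε₂ : diffDist G₂₁ G₂₂ P₂ α ≤ ε₂) :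
    diffDist (G₁₁ □ G₂₁) (G₁₂ □ G₂₂) (P₁ ⊗ₖ P₂) α ≤
      (Real.sqrt a₁ + Real.sqrt b₁) * max ε₁ ε₂ := by
  have hfrob₁ : frob P₁ = Real.sqrt a₁ := by
    rw [frob_of_transpose_mul_self_eq_one hP₁, Fintype.card_fin]
  have hfrob₂ : frob P₂ = Real.sqrt b₁ := by
    rw [frob_of_transpose_mul_self_eq_one hP₂, Fintype.card_fin]
  calc diffDist (G₁₁ □ G₂₁) (G₁₂ □ G₂₂) (P₁ ⊗ₖ P₂) α
      ≤ diffDist G₁₁ G₁₂ P₁ α * Real.sqrt b₁ + Real.sqrt a₁ * diffDist G₂₁ G₂₂ P₂ α := by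
        simpa only [hfrob₁, hfrob₂] using diffDist_boxProd_le G₁₁ G₂₁ G₁₂ G₂₂ P₁ P₂ α
    _ ≤ max ε₁ ε₂ * Real.sqrt b₁ + Real.sqrt a₁ * max ε₁ ε₂ := by
        gcongr
        exacts [hε₁.trans (le_max_left _ _), hε₂.trans (le_max_right _ _)]
    _ = (Real.sqrt a₁ + Real.sqrt b₁) * max ε₁ ε₂ := by ring

theorem stmt13 {a₁ a₂ b₁ b₂ : ℕ}
    (G₁₁ : SimpleGraph (Fin a₁)) (G₁₂ : SimpleGraph (Fin a₂))
    (G₂₁ : SimpleGraph (Fin b₁)) (G₂₂ : SimpleGraph (Fin b₂))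
    [DecidableRel G₁₁.Adj] [DecidableRel G₁₂.Adj]
    [DecidableRel G₂₁.Adj] [DecidableRel G₂₂.Adj]
    [DecidableRel (G₁₁ □ G₂₁).Adj] [DecidableRel (G₁₂ □ G₂₂).Adj]
    (P₁ : Matrix (Fin a₂) (Fin a₁) ℝ) (P₂ : Matrix (Fin b₂) (Fin b₁) ℝ)
    (hP₁ : P₁ᵀ * P₁ = 1) (hP₂ : P₂ᵀ * P₂ = 1)
    (α : ℝ) (hα : 0 < α) (ε₁ ε₂ : ℝ)
    (hε₁ : diffDist G₁₁ G₁₂ P₁ α ≤ ε₁) (hε₂ : diffDist G₂₁ G₂₂ P₂ α ≤ ε₂) :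
    diffDist (G₁₁ □ G₂₁) (G₁₂ □ G₂₂) (P₁ ⊗ₖ P₂) α ≤
      (Real.sqrt a₁ + Real.sqrt b₁) * max ε₁ ε₂ :=
  stmt13_general G₁₁ G₁₂ G₂₁ G₂₂ P₁ P₂ hP₁ hP₂ α ε₁ ε₂ hε₁ hε₂
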